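/- arXiv:2501.01062 — 2 statements merged into one kernel-verified Lean document; each statement's English description precedes it below -/
import Mathlib

section
/- If every vertex in round r+1 references at least f+1 of the at most 2f+1 vertices in round r, and a leader vertex v in round r is referenced by at least f+1 vertices of round r+1 (viewed as the set T), then every vertex of round r+2 (which references at least f+1 vertices of round r+1) references at least one vertex of T, and hence has a path to v. -/
theorem Finset.inter_nonempty_of_quorums {α : Type*} [DecidableEq α] {s t u : Finset α} {f : ℕ}
    (hs : s.card ≤ 2 * f + 1) (hts : t ⊆ s) (hus : u ⊆ s)
    (ht : f + 1 ≤ t.card) (hu : f + 1 ≤ u.card) : (t ∩ u).Nonempty :=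
  Finset.inter_nonempty_of_card_lt_card_add_card hts hus (by omega)

theorem quorum_step_path_to_leader_general {α : Type*}
    (f : ℕ)
    (R₁ R₂ : Finset α)  -- rounds r+1 and r+2
    (hR₁hi : R₁.card ≤ 2 * f + 1)
    (ref : α → Finset α) (v : α)
    (T : Finset α) (hT : T ⊆ R₁) (hTcard : f + 1 ≤ T.card)
    (hTref : ∀ u ∈ T, v ∈ ref u)
    (href : ∀ w ∈ R₂, ref w ⊆ R₁ ∧ f + 1 ≤ (ref w).card) :
    ∀ w ∈ R₂, ∃ u ∈ T, u ∈ ref w ∧ v ∈ ref u := by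
  classical
  intro w hw
  obtain ⟨hw_sub, hw_card⟩ := href w hw
  obtain ⟨u, hu⟩ := Finset.inter_nonempty_of_quorums hR₁hi hT hw_sub hTcard hw_card
  obtain ⟨huT, huw⟩ := Finset.mem_inter.mp hu
  exact ⟨u, huT, huw, hTref u huT⟩

/-- Quorum-intersection step: if every vertex of round `r+2` references at
least `f+1` vertices of round `r+1` (which has at most `2f+1` vertices), and
the leader `v` of round `r` is referenced by a set `T` of at least `f+1`
round-`(r+1)` vertices, then every round-`(r+2)` vertex references some vertex
of `T`, and hence has a path to `v`. -/
theorem quorum_step_path_to_leader {α : Type*} [DecidableEq α]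
    (f : ℕ) (hf : 1 ≤ f)
    (R₁ R₂ : Finset α)  -- rounds r+1 and r+2
    (hR₁lo : f + 1 ≤ R₁.card) (hR₁hi : R₁.card ≤ 2 * f + 1)
    (ref : α → Finset α) (v : α)
    (T : Finset α) (hT : T ⊆ R₁) (hTcard : f + 1 ≤ T.card)
    (hTref : ∀ u ∈ T, v ∈ ref u)
    (href : ∀ w ∈ R₂, ref w ⊆ R₁ ∧ f + 1 ≤ (ref w).card) :
    ∀ w ∈ R₂, ∃ u ∈ T, u ∈ ref w ∧ v ∈ ref u :=
  quorum_step_path_to_leader_general f R₁ R₂ hR₁hi ref v T hT hTcard hTref href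
end

section
/- Under reliable broadcast with the Agreement property, if one correct replica adds a vertex v to its DAG (after checking all of v's referenced vertices are present), then eventually every correct replica adds v to its DAG. Proof is by strong induction on rounds: the base case round 0 holds since all correct replicas share identical genesis vertices, and the inductive step follows since v's references lie in earlier rounds. -/
/-- Strong induction on rounds; genesis vertices have no references, so the base case of the round
induction is the instance `refs v = ∅` of `step`. -/
theorem refs_induction {V : Type*} (round : V → ℕ) (refs : V → Finset V)
    (hrefs_round : ∀ v, ∀ u ∈ refs v, round u < round v) {P : V → Prop}
    (step : ∀ v, (∀ u ∈ refs v, P u) → P v) (v : V) : P v :=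
  (measure round).wf.induction v fun v ih => step v fun u hu => ih u (hrefs_round v u hu)

/-- Under reliable broadcast with the Agreement property, if one correct
replica adds a vertex `v` to its DAG (having checked that all of `v`'s
referenced vertices — which lie in strictly earlier rounds — are present),
then eventually every correct replica adds `v` to its DAG. -/
theorem dag_vertex_agreement {V Rep : Type*}
    (Correct : Rep → Prop)
    (delivered : Rep → V → Prop)  -- eventually reliably delivered
    (adds : Rep → V → Prop)       -- eventually added to local DAG
    (round : V → ℕ) (refs : V → Finset V)
    (hrefs_round : ∀ v, ∀ u ∈ refs v, round u < round v)
    -- RB Agreement: if some correct replica delivers v, all correct replicas do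
    (hagree : ∀ v, (∃ p, Correct p ∧ delivered p v) →
      ∀ q, Correct q → delivered q v)
    -- a correct replica adds only delivered vertices
    (hadd_delivered : ∀ p v, Correct p → adds p v → delivered p v)
    -- a correct replica adds a vertex only after adding all its references
    (hadd_refs : ∀ p v, Correct p → adds p v → ∀ u ∈ refs v, adds p u)
    -- a correct replica eventually adds any delivered vertex whose references
    -- it has added
    (hadd_if : ∀ p v, Correct p → delivered p v →
      (∀ u ∈ refs v, adds p u) → adds p v) :
    ∀ (p q : Rep) (v : V), Correct p → Correct q → adds p v → adds q v := by
  suffices h : ∀ v, ∀ p q, Correct p → Correct q → adds p v → adds q v from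
    fun p q v => h v p q
  refine refs_induction round refs hrefs_round fun v ih p q hp hq hpv => ?_
  have hq_delivered : delivered q v := hagree v ⟨p, hp, hadd_delivered p v hp hpv⟩ q hq
  exact hadd_if q v hq hq_delivered fun u hu => ih u hu p q hp hq (hadd_refs p v hp hpv u hu)
end
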